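/- arXiv:1705.02043 — 2 statements merged into one kernel-verified Lean document; each statement's English description precedes it below -/
import Mathlib

section
/- For the alternating charge configuration with charges (+1,−1,+1,−1) at z-coordinates (1/8, 3/8, 5/8, 7/8) on the line x=y=1/2 in the unit cube, periodically extended in z with period 1, the potential at the location of either positive charge (summing over all other charges and all images) equals 4·M_{1D} = −8·ln 2. -/
open Filter

/-- Euclidean norm on `ℝ³` represented as `Fin 3 → ℝ`. -/
noncomputable def euclNorm (v : Fin 3 → ℝ) : ℝ := Real.sqrt (∑ i, v i ^ 2)

/-- The unit vector in the `z` direction. -/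
def ez : Fin 3 → ℝ := ![0, 0, 1]

/-- Charges `(+1, -1, +1, -1)`. -/
def madCharge : Fin 4 → ℝ := ![1, -1, 1, -1]

/-- Source positions `(1/2, 1/2, zₛ)` with `z`-coordinates `(1/8, 3/8, 5/8, 7/8)`. -/
noncomputable def madPos : Fin 4 → (Fin 3 → ℝ) :=
  fun s => ![1/2, 1/2, ![ (1:ℝ)/8, 3/8, 5/8, 7/8] s]

open Finset Topology Real SummationFilter

/-!
With `z_s = (2s+1)/8` and charge `(-1)^s`, the image of source `s` shifted by `m` lies at distance
`|4m + s - t| / 4` from charge `t`, and for even `t` its charge is `(-1)^(4m + s - t)`. So the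
potential truncated at `|m| ≤ n` is `4` times the sum of `(-1)^k / |k|` over the window
`-4n - t ≤ k ≤ 4n + 3 - t`. Both halves of this two-sided series are minus the alternating harmonic
series, whose even partial sums are `H_{2M} - H_M → log 2`; hence the window sums tend to
`-2 log 2` however the two ends go to infinity.
-/

theorem sum_range_two_mul_neg_one_pow_div_succ (M : ℕ) :
    ∑ i ∈ range (2 * M), (-1 : ℝ) ^ i / (i + 1) = harmonic (2 * M) - harmonic M := by
  induction M with
  | zero => simp
  | succ M ih =>
    rw [show 2 * (M + 1) = 2 * M + 1 + 1 by ring, sum_range_succ, sum_range_succ, ih,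
      harmonic_succ, harmonic_succ, harmonic_succ, pow_succ, pow_mul, neg_one_sq, one_pow]
    push_cast
    field_simp
    ring

theorem tendsto_harmonic_two_mul_sub_harmonic :
    Tendsto (fun M : ℕ => (harmonic (2 * M) - harmonic M : ℝ)) atTop (𝓝 (log 2)) := by
  have h2 : Tendsto (fun M : ℕ => 2 * M) atTop atTop :=
    tendsto_id.const_mul_atTop' two_pos
  have := ((tendsto_harmonic_sub_log.comp h2).sub tendsto_harmonic_sub_log).add_const (log 2)
  rw [sub_self, zero_add] at this
  refine this.congr' ?_
  filter_upwards [eventually_ge_atTop 1] with M hM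
  have hM0 : (M : ℝ) ≠ 0 := by positivity
  simp only [Function.comp_apply, Nat.cast_mul, Nat.cast_ofNat, log_mul two_ne_zero hM0]
  ring

theorem tendsto_sum_range_neg_one_pow_div_succ :
    Tendsto (fun n => ∑ i ∈ range n, (-1 : ℝ) ^ i / (i + 1)) atTop (𝓝 (log 2)) := by
  have hanti : Antitone fun i : ℕ => 1 / ((i : ℝ) + 1) := fun i j hij =>
    one_div_le_one_div_of_le (by positivity) (by simpa using hij)
  obtain ⟨l, hl⟩ := hanti.tendsto_alternating_series_of_tendsto_zero
    tendsto_one_div_add_atTop_nhds_zero_nat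
  simp only [mul_one_div] at hl
  have h2 : Tendsto (fun M : ℕ => 2 * M) atTop atTop :=
    tendsto_id.const_mul_atTop' two_pos
  have hl2 := hl.comp h2
  simp only [Function.comp_def, sum_range_two_mul_neg_one_pow_div_succ] at hl2
  rwa [tendsto_nhds_unique hl2 tendsto_harmonic_two_mul_sub_harmonic] at hl

theorem sum_Icc_neg_natCast_natCast {M : Type*} [AddCommMonoid M] (f : ℤ → M) (m n : ℕ) :
    ∑ k ∈ Icc (-(m : ℤ)) n, f k = ∑ i ∈ range m, f (-(i + 1)) + ∑ i ∈ range (n + 1), f i := by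
  induction m with
  | zero =>
    induction n with
    | zero => simp
    | succ n ih =>
      rw [Nat.cast_succ, ← insert_Icc_right_eq_Icc_add_one (by omega), sum_insert (by simp),
        ih, sum_range_succ _ (n + 1)]
      simp [add_comm]
  | succ m ih =>
    rw [Nat.cast_succ, neg_add, ← sub_eq_add_neg, ← insert_Icc_left_eq_Icc_sub_one (by omega),
      sum_insert (by simp), ih, sum_range_succ (fun i : ℕ => f (-(i + 1)))]
    abel_nf

theorem Int.tendsto_toNat_atTop : Tendsto Int.toNat atTop atTop :=
  tendsto_atTop_atTop.2 fun n => ⟨n, fun k hk => by omega⟩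

theorem hasSum_conditional_int_of_nat {M : Type*} [AddCommMonoid M] [TopologicalSpace M]
    [ContinuousAdd M] {f : ℤ → M} {a b : M}
    (hpos : HasSum (fun n : ℕ => f n) a (conditional ℕ))
    (hneg : HasSum (fun n : ℕ => f (-(n + 1))) b (conditional ℕ)) :
    HasSum f (b + a) (conditional ℤ) := by
  rw [HasSum, conditional_filter_eq_map_range, tendsto_map'_iff] at hpos hneg
  rw [HasSum, conditional_filter, tendsto_map'_iff]
  have hleft : Tendsto (fun p : ℤ × ℤ => (-p.1).toNat) (atBot ×ˢ atTop) atTop :=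
    Int.tendsto_toNat_atTop.comp (tendsto_neg_atBot_atTop.comp tendsto_fst)
  have hright : Tendsto (fun p : ℤ × ℤ => p.2.toNat + 1) (atBot ×ˢ atTop) atTop :=
    (tendsto_add_atTop_nat 1).comp (Int.tendsto_toNat_atTop.comp tendsto_snd)
  refine ((hneg.comp hleft).add (hpos.comp hright)).congr' ?_
  filter_upwards [prod_mem_prod (eventually_le_atBot 0) (eventually_ge_atTop 0)] with ⟨l, r⟩ h
  obtain ⟨hl, hr⟩ : l ≤ 0 ∧ 0 ≤ r := h
  obtain ⟨m, rfl⟩ : ∃ m : ℕ, l = -m := ⟨(-l).toNat, by omega⟩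
  obtain ⟨n, rfl⟩ : ∃ n : ℕ, r = n := ⟨r.toNat, by omega⟩
  simp [sum_Icc_neg_natCast_natCast]

-- At `k = 0` this is `1 / 0 = 0`, which is exactly the excluded self-term.
noncomputable def alternatingInvAbs (k : ℤ) : ℝ := (-1) ^ k / |(k : ℝ)|

theorem alternatingInvAbs_neg (k : ℤ) : alternatingInvAbs (-k) = alternatingInvAbs k := by
  rw [alternatingInvAbs, alternatingInvAbs, zpow_neg, ← inv_zpow, inv_neg_one, Int.cast_neg,
    abs_neg]

theorem alternatingInvAbs_natCast_add_one (n : ℕ) :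
    alternatingInvAbs (n + 1) = -((-1) ^ n / (n + 1)) := by
  rw [alternatingInvAbs, zpow_add_one₀ (by norm_num), zpow_natCast, ← neg_div]
  push_cast
  rw [abs_of_pos (by positivity), mul_neg_one]

theorem hasSum_alternatingInvAbs : HasSum alternatingInvAbs (-2 * log 2) (conditional ℤ) := by
  have hpos : HasSum (fun n : ℕ => alternatingInvAbs n) (-log 2) (conditional ℕ) := by
    rw [HasSum, conditional_filter_eq_map_range, tendsto_map'_iff, ← tendsto_add_atTop_iff_nat 1]
    refine tendsto_sum_range_neg_one_pow_div_succ.neg.congr fun n => ?_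
    simp only [Function.comp_apply, sum_range_succ', Nat.cast_add, Nat.cast_one,
      alternatingInvAbs_natCast_add_one, sum_neg_distrib]
    simp [alternatingInvAbs]
  have hneg : HasSum (fun n : ℕ => alternatingInvAbs (-(n + 1))) (-log 2) (conditional ℕ) := by
    rw [HasSum, conditional_filter_eq_map_range, tendsto_map'_iff]
    refine tendsto_sum_range_neg_one_pow_div_succ.neg.congr fun n => ?_
    simp only [Function.comp_apply, alternatingInvAbs_neg, alternatingInvAbs_natCast_add_one,
      sum_neg_distrib]
  convert hasSum_conditional_int_of_nat hpos hneg using 1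
  ring

theorem sum_Ico_sum_fin_mul_add_sub {M : Type*} [AddCommMonoid M] (d : ℕ) (F : ℤ → M)
    (a b c : ℤ) :
    ∑ m ∈ Ico a b, ∑ s : Fin d, F (d * m + s - c) = ∑ k ∈ Ico (d * a - c) (d * b - c), F k := by
  rcases le_total b a with hba | hab
  · rw [Ico_eq_empty_of_le hba, Ico_eq_empty_of_le (by gcongr), sum_empty, sum_empty]
  induction b, hab using Int.leInduction with
  | base => simp
  | succ b hab ih =>
    rw [← insert_Ico_right_eq_Ico_add_one hab, sum_insert right_notMem_Ico, ih, add_comm,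
      mul_add_one, add_sub_right_comm,
      ← Ico_union_Ico_eq_Ico (b := d * b - c) (by gcongr) (le_add_of_nonneg_right (by positivity)),
      sum_union (Ico_disjoint_Ico_consecutive _ _ _), Int.Ico_eq_finset_map (d * b - c), sum_map,
      Fin.sum_univ_eq_sum_range (fun i => F (d * b + i - c))]
    simp [add_sub_right_comm]

theorem euclNorm_zero_zero (c : ℝ) : euclNorm ![0, 0, c] = |c| := by
  simp [euclNorm, Fin.sum_univ_three, sqrt_sq_eq_abs]

theorem madPos_apply (s : Fin 4) : madPos s = ![1 / 2, 1 / 2, (2 * (s : ℕ) + 1 : ℝ) / 8] := by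
  fin_cases s <;> norm_num [madPos]

theorem madCharge_apply (s : Fin 4) : madCharge s = (-1) ^ (s : ℕ) := by
  fin_cases s <;> norm_num [madCharge]

theorem madPos_sub_madPos_add_smul_ez (t s : Fin 4) (m : ℤ) :
    madPos t - (madPos s + (m : ℝ) • ez) = ![0, 0, -((4 * m + s - t : ℤ) : ℝ) / 4] := by
  ext i
  fin_cases i <;> simp [madPos_apply, ez]
  ring

theorem madCharge_div_euclNorm {t : Fin 4} (ht : Even (t : ℕ)) (s : Fin 4) (m : ℤ) :
    madCharge s / euclNorm (madPos t - (madPos s + (m : ℝ) • ez)) =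
      4 * alternatingInvAbs (4 * m + s - t) := by
  have hsign : (-1 : ℝ) ^ (4 * m + s - t) = (-1) ^ (s : ℕ) := by
    rw [zpow_sub₀ (by norm_num), zpow_add₀ (by norm_num), zpow_mul, zpow_natCast, zpow_natCast,
      ht.neg_one_pow]
    norm_num
  rw [madPos_sub_madPos_add_smul_ez, euclNorm_zero_zero, madCharge_apply, alternatingInvAbs,
    hsign, abs_div, abs_neg, abs_of_pos (by norm_num : (0 : ℝ) < 4), div_div_eq_mul_div]
  ring

theorem madelung_summand_eq {t : Fin 4} (ht : Even (t : ℕ)) (s : Fin 4) (m : ℤ) :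
    (if s = t ∧ m = 0 then 0 else madCharge s / euclNorm (madPos t - (madPos s + (m : ℝ) • ez))) =
      4 * alternatingInvAbs (4 * m + s - t) := by
  split_ifs with h
  · obtain ⟨rfl, rfl⟩ := h
    simp [alternatingInvAbs]
  · exact madCharge_div_euclNorm ht s m

/-- For the alternating charge configuration `(+1,−1,+1,−1)` at `z = (1/8,3/8,5/8,7/8)`
periodically extended in `z`, the potential at either positive charge (index `0` or `2`),
summing over all other charges and all periodic images and excluding the self-term,
equals `4·M_{1D} = −8·ln 2`. -/
theorem madelung_chain_potential (t : Fin 4) (ht : t = 0 ∨ t = 2) :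
    Filter.Tendsto
      (fun n : ℕ => ∑ m ∈ Finset.Icc (-(n : ℤ)) (n : ℤ), ∑ s : Fin 4,
        if s = t ∧ m = 0 then 0
        else madCharge s / euclNorm (madPos t - (madPos s + (m : ℝ) • ez)))
      atTop (nhds (-8 * Real.log 2)) := by
  have hEven : Even (t : ℕ) := by rcases ht with rfl | rfl <;> decide
  have hwindow : Tendsto (fun n : ℕ => (4 * -(n : ℤ) - t, 4 * ((n : ℤ) + 1) - t - 1)) atTop
      (atBot ×ˢ atTop) := by
    refine .prodMk (tendsto_atTop_atBot.2 fun b => ⟨(-b).toNat, fun n hn => ?_⟩)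
      (tendsto_atTop_atTop.2 fun b => ⟨b.toNat, fun n hn => ?_⟩) <;> omega
  have hsum := hasSum_alternatingInvAbs
  rw [HasSum, conditional_filter, tendsto_map'_iff] at hsum
  have hreindex := sum_Ico_sum_fin_mul_add_sub 4 alternatingInvAbs
  push_cast at hreindex
  rw [show -8 * log 2 = 4 * (-2 * log 2) by ring]
  refine ((hsum.comp hwindow).const_mul 4).congr fun n => ?_
  simp only [Function.comp_apply, Icc_sub_one_right_eq_Ico, madelung_summand_eq hEven, ← mul_sum,
    ← Ico_add_one_right_eq_Icc (-(n : ℤ)), hreindex]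
end

section
/- For the finite truncation of the 1D alternating charge chain with n periodic image boxes on each side, the difference between the potentials at the two positive charges q₃ − q₁ (located at z = 5/8 and z = 1/8 in the original box) satisfies q₃ − q₁ = −1/(2n²) + O(1/n³) as n → ∞. -/
open Filter

/-- Potential at charge `t` from the truncated chain of `2n+1` boxes, excluding the
self-term. -/
noncomputable def truncPotential (t : Fin 4) (n : ℕ) : ℝ :=
  ∑ m ∈ Finset.Icc (-(n : ℤ)) (n : ℤ), ∑ s : Fin 4,
    if s = t ∧ m = 0 then 0
    else madCharge s / euclNorm (madPos t - (madPos s + (m : ℝ) • ez))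

/-!
Moving the observation point from `z = 1/8` to `z = 5/8` changes the contribution of box `m`
by `edgeTerm (m + 1) - edgeTerm m`, where `edgeTerm x = 1 / |x - 1/4| - 1 / |x - 1/2|`.
The sum over the boxes therefore telescopes, and `q₃ − q₁ = 1 / (n + 3/4) - 1 / (n + 1/4)`
exactly; its expansion in `1/n` starts with `-1 / (2 n²)`.
-/

open Finset

lemma euclNorm_sub_add_smul_ez (x y a b c : ℝ) :
    euclNorm (![x, y, a] - (![x, y, b] + c • ez)) = |a - b - c| := by
  simp only [euclNorm, ez, Fin.sum_univ_three, Pi.sub_apply, Pi.add_apply, Pi.smul_apply,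
    smul_eq_mul, Matrix.cons_val_zero, Matrix.cons_val_one, Matrix.cons_val_two,
    Matrix.head_cons, Matrix.tail_cons]
  rw [← Real.sqrt_sq_eq_abs]
  congr 1
  ring

-- The excluded self-term may be put back in: in Lean `1 / |0| = 0`.
lemma truncPotential_eq_sum_abs (t : Fin 4) (n : ℕ) :
    truncPotential t n = ∑ m ∈ Icc (-(n : ℤ)) n, ∑ s : Fin 4,
      madCharge s / |madPos t 2 - madPos s 2 - m| := by
  refine sum_congr rfl fun m _ => sum_congr rfl fun s _ => ?_
  rw [madPos, madPos, euclNorm_sub_add_smul_ez]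
  split_ifs with h
  · obtain ⟨rfl, rfl⟩ := h
    simp
  · rfl

lemma Finset.sum_Icc_int_sub {M : Type*} [AddCommGroup M] (F : ℤ → M) (n : ℕ) :
    ∑ m ∈ Icc (-(n : ℤ)) n, (F (m + 1) - F m) = F (n + 1) - F (-n) := by
  induction n with
  | zero => simp
  | succ n ih =>
    rw [Nat.cast_succ, sum_Icc_succ_eq_add_endpoints, ih]
    abel_nf

noncomputable def edgeTerm (x : ℝ) : ℝ := 1 / |x - 1/4| - 1 / |x - 1/2|

lemma boxPotential_two_sub_zero (m : ℤ) :
    ∑ s : Fin 4, madCharge s / |madPos 2 2 - madPos s 2 - m|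
      - ∑ s : Fin 4, madCharge s / |madPos 0 2 - madPos s 2 - m|
      = edgeTerm ((m + 1 : ℤ) : ℝ) - edgeTerm m := by
  push_cast
  simp only [Fin.sum_univ_four, madCharge, madPos, edgeTerm, Matrix.cons_val_zero,
    Matrix.cons_val_one, Matrix.cons_val_two, Matrix.cons_val_three, Matrix.head_cons,
    Matrix.tail_cons]
  -- `|a|` and `|-a|` both become `√(a ^ 2)`, which `ring_nf` normalizes alike.
  simp only [← Real.sqrt_sq_eq_abs]
  ring_nf

lemma truncPotential_two_sub_zero (n : ℕ) :
    truncPotential 2 n - truncPotential 0 n = 1 / (n + 3/4) - 1 / (n + 1/4) := by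
  rw [truncPotential_eq_sum_abs, truncPotential_eq_sum_abs, ← sum_sub_distrib]
  simp only [boxPotential_two_sub_zero]
  rw [sum_Icc_int_sub (fun m : ℤ => edgeTerm m), edgeTerm, edgeTerm]
  push_cast
  have hn : (0 : ℝ) ≤ n := n.cast_nonneg
  rw [abs_of_pos (by linarith), abs_of_pos (by linarith), abs_of_neg (by linarith),
    abs_of_neg (by linarith)]
  ring

lemma abs_one_div_sub_one_div_add_one_div_sq_le {x : ℝ} (hx : 0 < x) :
    |1 / (x + 3/4) - 1 / (x + 1/4) - (-1 / (2 * x ^ 2))| ≤ 1 / x ^ 3 := by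
  have hexact : 1 / (x + 3/4) - 1 / (x + 1/4) - (-1 / (2 * x ^ 2))
      = (x + 3/16) / (2 * x ^ 2 * ((x + 3/4) * (x + 1/4))) := by
    field_simp
    ring
  rw [hexact, abs_of_nonneg (by positivity), div_le_div_iff₀ (by positivity) (by positivity)]
  nlinarith [pow_pos hx 3, pow_pos hx 4]

/-- For the finite truncation with `n` image boxes on each side, the potentials at the two
positive charges satisfy `q₃ − q₁ = −1/(2n²) + O(1/n³)`. -/
theorem truncated_chain_dipole_asymmetry :
    ∃ C : ℝ, ∀ n : ℕ, 1 ≤ n →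
      |(truncPotential 2 n - truncPotential 0 n) - (-1 / (2 * (n : ℝ) ^ 2))| ≤
        C / (n : ℝ) ^ 3 := by
  refine ⟨1, fun n hn => ?_⟩
  rw [truncPotential_two_sub_zero]
  exact abs_one_div_sub_one_div_add_one_div_sq_le (by exact_mod_cast hn)
end
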